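/- arXiv:1802.05351 — 2 statements merged into one kernel-verified Lean document; each statement's English description precedes it below -/
import Mathlib

section
/- For ridge regression with λ > 0, if w* = (X Xᵀ + λ I)⁻¹ X y is nonzero, then the hyperparameter-stealing estimate λ̂ = -(w*ᵀ w*)⁻¹ w*ᵀ (X(Xᵀ w* - y)) equals λ. -/
open Matrix
open scoped ComplexOrder

theorem Matrix.posDef_mul_conjTranspose_add_smul_one {m n 𝕜 : Type*} [Fintype m] [Fintype n]
    [DecidableEq m] [RCLike 𝕜] (A : Matrix m n 𝕜) {c : ℝ} (hc : 0 < c) :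
    (A * Aᴴ + c • (1 : Matrix m m 𝕜)).PosDef :=
  PosDef.posSemidef_add (posSemidef_self_mul_conjTranspose A) (PosDef.one.smul hc)

/-- Up to a factor 2, the left side is the gradient of `‖y - Xᵀw‖² + λ‖w‖²` at the ridge
minimizer `w = (XXᵀ + λI)⁻¹Xy`. -/
theorem ridge_gradient_eq_zero {m n : Type*} [Fintype m] [Fintype n] [DecidableEq m]
    (X : Matrix m n ℝ) (y : n → ℝ) {lam : ℝ} (hlam : 0 < lam) :
    X *ᵥ (Xᵀ *ᵥ ((X * Xᵀ + lam • 1)⁻¹ *ᵥ (X *ᵥ y)) - y) +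
      lam • ((X * Xᵀ + lam • 1)⁻¹ *ᵥ (X *ᵥ y)) = 0 := by
  set A := X * Xᵀ + lam • (1 : Matrix m m ℝ)
  set w := A⁻¹ *ᵥ (X *ᵥ y)
  have hA : IsUnit A.det := by
    have hpd := X.posDef_mul_conjTranspose_add_smul_one hlam
    rw [conjTranspose_eq_transpose_of_trivial X] at hpd
    exact (isUnit_iff_isUnit_det A).mp hpd.isUnit
  have normal_eq : A *ᵥ w = X *ᵥ y := by
    rw [mulVec_mulVec, mul_nonsing_inv A hA, one_mulVec]
  simp only [A, add_mulVec, smul_mulVec, one_mulVec, ← mulVec_mulVec] at normal_eq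
  rw [mulVec_sub, ← normal_eq]
  abel

theorem neg_inv_dotProduct_self_mul_dotProduct_eq_of_add_smul_eq_zero {n R : Type*} [Fintype n]
    [Field R] [LinearOrder R] [IsStrictOrderedRing R] {a b : n → R} {c : R} (ha : a ≠ 0)
    (h : b + c • a = 0) : -(a ⬝ᵥ a)⁻¹ * (a ⬝ᵥ b) = c := by
  have haa : a ⬝ᵥ a ≠ 0 := fun h0 => ha (dotProduct_self_eq_zero.mp h0)
  rw [eq_neg_of_add_eq_zero_left h, dotProduct_neg, dotProduct_smul, smul_eq_mul]
  field_simp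

/-- For ridge regression with `λ > 0`, if `w* = (X Xᵀ + λ I)⁻¹ X y` is
nonzero, the hyperparameter-stealing estimate
`λ̂ = -(w*ᵀ w*)⁻¹ w*ᵀ (X(Xᵀ w* - y))` equals `λ`. -/
theorem stmt_3 (m n : ℕ) (X : Matrix (Fin m) (Fin n) ℝ) (y : Fin n → ℝ)
    (lam : ℝ) (hlam : 0 < lam) (w : Fin m → ℝ)
    (hw : w = (X * X.transpose + lam • (1 : Matrix (Fin m) (Fin m) ℝ))⁻¹.mulVec
      (X.mulVec y))
    (hw0 : w ≠ 0) :
    -(dotProduct w w)⁻¹ *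
      dotProduct w (X.mulVec (X.transpose.mulVec w - y)) = lam := by
  subst hw
  exact neg_inv_dotProduct_self_mul_dotProduct_eq_of_add_smul_eq_zero hw0
    (ridge_gradient_eq_zero X y hlam)
end

section
/- For kernel ridge regression with positive definite gram matrix K and λ > 0, if α* = (K + λ I)⁻¹ y is nonzero, then the estimate λ̂ = -(α*ᵀ α*)⁻¹ α*ᵀ (K α* - y) equals λ. -/
/-! Since `(K + λ I) α* = y`, the residual is `K α* - y = -λ α*`, and the least-squares
estimator of the scale `c` in `b = -c a` returns `c` exactly as soon as `a ≠ 0`.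
Invertibility of `K + λ I` follows from `α* ≠ 0`, because Mathlib's inverse of a singular
matrix is `0`. -/

open Matrix

variable {ι 𝕜 : Type*} [Fintype ι]

theorem neg_inv_dotProduct_self_mul_dotProduct_neg_smul [Field 𝕜] [LinearOrder 𝕜]
    [IsStrictOrderedRing 𝕜] {a : ι → 𝕜} (ha : a ≠ 0) (c : 𝕜) :
    -(a ⬝ᵥ a)⁻¹ * (a ⬝ᵥ -(c • a)) = c := by
  have haa : a ⬝ᵥ a ≠ 0 := dotProduct_self_eq_zero.not.mpr ha
  rw [dotProduct_neg, dotProduct_smul, smul_eq_mul]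
  field_simp

section CommRing

variable [DecidableEq ι] [CommRing 𝕜]

theorem Matrix.isUnit_det_of_inv_mulVec_ne_zero {A : Matrix ι ι 𝕜} {y : ι → 𝕜}
    (h : A⁻¹ *ᵥ y ≠ 0) : IsUnit A.det := by
  by_contra hA
  exact h (by rw [nonsing_inv_apply_not_isUnit A hA, zero_mulVec])

theorem Matrix.mulVec_inv_mulVec {A : Matrix ι ι 𝕜} (hA : IsUnit A.det) (y : ι → 𝕜) :
    A *ᵥ (A⁻¹ *ᵥ y) = y := by
  rw [mulVec_mulVec, mul_nonsing_inv A hA, one_mulVec]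

theorem ridge_residual_eq_neg_smul {K : Matrix ι ι 𝕜} {c : 𝕜} {y α : ι → 𝕜}
    (hα : (K + c • 1) *ᵥ α = y) : K *ᵥ α - y = -(c • α) := by
  rw [← hα, add_mulVec, smul_mulVec, one_mulVec]
  abel

end CommRing

theorem stmt_5_general (n : ℕ) (K : Matrix (Fin n) (Fin n) ℝ)
    (lam : ℝ) (y : Fin n → ℝ) (α : Fin n → ℝ)
    (hα : α = (K + lam • (1 : Matrix (Fin n) (Fin n) ℝ))⁻¹.mulVec y)
    (hα0 : α ≠ 0) :
    -(dotProduct α α)⁻¹ *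
      dotProduct α (K.mulVec α - y) = lam := by
  have hdet := isUnit_det_of_inv_mulVec_ne_zero (hα ▸ hα0)
  have hsolve : (K + lam • 1) *ᵥ α = y := hα ▸ mulVec_inv_mulVec hdet y
  rw [ridge_residual_eq_neg_smul hsolve]
  exact neg_inv_dotProduct_self_mul_dotProduct_neg_smul hα0 lam

/-- For kernel ridge regression with positive definite `K` and `λ > 0`, if
`α* = (K + λ I)⁻¹ y` is nonzero, then
`λ̂ = -(α*ᵀ α*)⁻¹ α*ᵀ (K α* - y)` equals `λ`. -/
theorem stmt_5 (n : ℕ) (K : Matrix (Fin n) (Fin n) ℝ) (hK : K.PosDef)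
    (lam : ℝ) (hlam : 0 < lam) (y : Fin n → ℝ) (α : Fin n → ℝ)
    (hα : α = (K + lam • (1 : Matrix (Fin n) (Fin n) ℝ))⁻¹.mulVec y)
    (hα0 : α ≠ 0) :
    -(dotProduct α α)⁻¹ *
      dotProduct α (K.mulVec α - y) = lam :=
  stmt_5_general n K lam y α hα hα0
end
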